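/- Let γ : ℝ/Lℤ → ℝⁿ be a C⁴ closed curve parametrized by arclength with constant curvature 1 and positive torsion τ(t) > 0 everywhere, and let N(t) = γ''(t) be the principal normal. For the normal variation γ_ε = γ + εN rescaled to constant length, Γ_ε(t) = (L/ℓ(γ_ε))γ_ε(t), one has d/dε|_{ε=0} κΓ_ε(t) = −τ(t)² < 0 for every t. -/

import Mathlib

/-!
Scaling a curve by `c` divides its curvature by `|c|`, so `κΓ_ε(t) = (ℓ(γ_ε)/L) · κγ_ε(t)`.
Both factors equal `1` at `ε = 0`. The first has derivative `-1`: the first variation of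
length along the normal is `∫ T·N' = -L`, because `T·N' = -‖N‖² = -1`. The second has derivative
`N·N'' - 2 T·N' = 2 - ‖N'‖²`, because `N·N'' = -‖N'‖²`. Their sum is
`1 - ‖N'‖² = -‖N' + T‖² = -τ²`.
-/

/-- Curvature of a regular C² curve: κα = ‖α''(α'·α') − α'(α''·α')‖ · ‖α'‖⁻⁴. -/
noncomputable def curv {n : ℕ} (α : ℝ → EuclideanSpace ℝ (Fin n)) (t : ℝ) : ℝ :=
  ‖(inner ℝ (deriv α t) (deriv α t) : ℝ) • deriv (deriv α) t -
      (inner ℝ (deriv (deriv α) t) (deriv α t) : ℝ) • deriv α t‖ / ‖deriv α t‖ ^ 4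

open RealInnerProductSpace

theorem ContDiff.differentiable_deriv_iterate {E : Type*} [NormedAddCommGroup E]
    [NormedSpace ℝ E] {f : ℝ → E} {n : WithTop ℕ∞} (k : ℕ) (hf : ContDiff ℝ n f) (hk : k < n) :
    Differentiable ℝ (deriv^[k] f) :=
  iteratedDeriv_eq_iterate (f := f) ▸ hf.differentiable_iteratedDeriv k hk

theorem ContDiff.continuous_deriv_iterate {E : Type*} [NormedAddCommGroup E]
    [NormedSpace ℝ E] {f : ℝ → E} {n : WithTop ℕ∞} (k : ℕ) (hf : ContDiff ℝ n f) (hk : k ≤ n) :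
    Continuous (deriv^[k] f) :=
  iteratedDeriv_eq_iterate (f := f) ▸ hf.continuous_iteratedDeriv k hk

theorem deriv_add_const_smul {E : Type*} [NormedAddCommGroup E] [NormedSpace ℝ E] {γ η : ℝ → E}
    {s : ℝ} (ε : ℝ) (hγ : DifferentiableAt ℝ γ s) (hη : DifferentiableAt ℝ η s) :
    deriv (fun r => γ r + ε • η r) s = deriv γ s + ε • deriv η s :=
  (hγ.hasDerivAt.add (hη.hasDerivAt.const_smul ε)).deriv

section InnerProductSpace

variable {F : Type*} [NormedAddCommGroup F] [InnerProductSpace ℝ F]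

theorem HasDerivAt.norm {f : ℝ → F} {f' : F} {x : ℝ} (hf : HasDerivAt f f' x) (h0 : f x ≠ 0) :
    HasDerivAt (fun y => ‖f y‖) (⟪f x, f'⟫ / ‖f x‖) x := by
  have h := hf.norm_sq.sqrt (pow_ne_zero 2 (norm_ne_zero_iff.mpr h0))
  simp only [Real.sqrt_sq (norm_nonneg _)] at h
  convert h using 1
  ring

theorem inner_deriv_add_inner_deriv_eq_zero {f g : ℝ → F} {s c : ℝ}
    (hf : DifferentiableAt ℝ f s) (hg : DifferentiableAt ℝ g s) (h : ∀ u, ⟪f u, g u⟫ = c) :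
    ⟪deriv f s, g s⟫ + ⟪f s, deriv g s⟫ = 0 := by
  have h' := hf.hasDerivAt.inner ℝ hg.hasDerivAt
  rw [funext h] at h'
  rw [add_comm]
  exact h'.unique (hasDerivAt_const s c)

theorem inner_deriv_self_eq_zero {f : ℝ → F} {s c : ℝ} (hf : DifferentiableAt ℝ f s)
    (h : ∀ u, ‖f u‖ = c) : ⟪deriv f s, f s⟫ = 0 := by
  have := inner_deriv_add_inner_deriv_eq_zero hf hf (c := c ^ 2) fun u => by
    rw [real_inner_self_eq_norm_sq, h]
  rw [real_inner_comm (deriv f s)] at this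
  linarith

theorem inner_deriv_deriv_self_eq_neg_norm_sq {f : ℝ → F} {s c : ℝ} (hf : Differentiable ℝ f)
    (hf' : DifferentiableAt ℝ (deriv f) s) (h : ∀ u, ‖f u‖ = c) :
    ⟪deriv (deriv f) s, f s⟫ = -‖deriv f s‖ ^ 2 := by
  have := inner_deriv_add_inner_deriv_eq_zero hf' (hf s)
    fun u => inner_deriv_self_eq_zero (hf u) h
  rw [real_inner_self_eq_norm_sq] at this
  linarith

noncomputable def curvatureOf (v a : F) : ℝ :=
  ‖⟪v, v⟫ • a - ⟪a, v⟫ • v‖ / ‖v‖ ^ 4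

theorem curvatureOf_of_norm_eq_one {v a : F} (hv : ‖v‖ = 1) (hav : ⟪a, v⟫ = 0) :
    curvatureOf v a = ‖a‖ := by
  simp [curvatureOf, hv, hav]

theorem hasDerivAt_curvatureOf_add_smul {v w a b : F} (hv : ‖v‖ = 1) (hav : ⟪a, v⟫ = 0)
    (ha : a ≠ 0) :
    HasDerivAt (fun ε : ℝ => curvatureOf (v + ε • w) (a + ε • b))
      (⟪a, b⟫ / ‖a‖ - 2 * ‖a‖ * ⟪v, w⟫) 0 := by
  have hline : ∀ x y : F, HasDerivAt (fun ε : ℝ => x + ε • y) y 0 := fun x y => by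
    simpa using ((hasDerivAt_id (0 : ℝ)).smul_const y).const_add x
  have hnum := (((hline v w).inner ℝ (hline v w)).smul (hline a b)).sub
    (((hline a b).inner ℝ (hline v w)).smul (hline v w))
  have hnorm := hnum.norm (by simp [hv, hav, ha])
  have hden := ((hline v w).norm (by simp [← norm_ne_zero_iff, hv])).pow 4
  refine (hnorm.div hden (by simp [hv])).congr_deriv ?_
  have hva : ⟪v, a⟫ = 0 := by rwa [real_inner_comm]
  simp [hv, hva, inner_sub_right, inner_add_right, inner_smul_right, real_inner_comm]
  field_simp
  ring

theorem hasDerivAt_intervalIntegral_norm_add_smul {T P : ℝ → F} {a b : ℝ} (hT : Continuous T)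
    (hP : Continuous P) (hT0 : ∀ u, T u ≠ 0) :
    HasDerivAt (fun ε : ℝ => ∫ u in a..b, ‖T u + ε • P u‖)
      (∫ u in a..b, ⟪T u, P u⟫ / ‖T u‖) 0 := by
  have hcont : ∀ ε : ℝ, Continuous fun u => ‖T u + ε • P u‖ := fun ε => by fun_prop
  have hlip : ∀ u, LipschitzWith (Real.nnabs ‖P u‖) fun ε : ℝ => ‖T u + ε • P u‖ := fun u =>
    LipschitzWith.of_dist_le_mul fun x y => by
      refine (dist_norm_norm_le _ _).trans_eq ?_
      rw [add_sub_add_left_eq_sub, ← sub_smul, norm_smul, Real.coe_nnabs, abs_norm, mul_comm,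
        Real.dist_eq, Real.norm_eq_abs]
  have hderiv : ∀ u, HasDerivAt (fun ε : ℝ => ‖T u + ε • P u‖) (⟪T u, P u⟫ / ‖T u‖) 0 :=
    fun u => by
      have hline : HasDerivAt (fun ε : ℝ => T u + ε • P u) (P u) 0 := by
        simpa using ((hasDerivAt_id (0 : ℝ)).smul_const (P u)).const_add (T u)
      simpa using hline.norm (by simpa using hT0 u)
  refine (intervalIntegral.hasDerivAt_integral_of_dominated_loc_of_lip Filter.univ_mem
    (.of_forall fun ε => (hcont ε).aestronglyMeasurable) ((hcont 0).intervalIntegrable _ _) ?_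
    (.of_forall fun u _ => (hlip u).lipschitzOnWith) (hP.norm.intervalIntegrable _ _)
    (.of_forall fun u _ => hderiv u)).2
  exact ((hT.inner hP).div hT.norm fun u => norm_ne_zero_iff.mpr (hT0 u)).aestronglyMeasurable

theorem inner_deriv_deriv_deriv_eq_neg_one {γ : ℝ → F} (hγ : ContDiff ℝ 3 γ)
    (hunit : ∀ t, ‖deriv γ t‖ = 1) (hκ : ∀ t, ‖deriv (deriv γ) t‖ = 1) (t : ℝ) :
    ⟪deriv γ t, deriv (deriv (deriv γ)) t⟫ = -1 := by
  have d1 : Differentiable ℝ (deriv γ) := hγ.differentiable_deriv_iterate 1 (by norm_num)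
  have d2 : Differentiable ℝ (deriv (deriv γ)) := hγ.differentiable_deriv_iterate 2 (by norm_num)
  rw [real_inner_comm, inner_deriv_deriv_self_eq_neg_norm_sq d1 (d2 t) hunit, hκ t, one_pow]

theorem hasDerivAt_length_add_smul_normal {γ : ℝ → F} {a b : ℝ} (hγ : ContDiff ℝ 3 γ)
    (hunit : ∀ t, ‖deriv γ t‖ = 1) (hκ : ∀ t, ‖deriv (deriv γ) t‖ = 1) :
    HasDerivAt (fun ε : ℝ => ∫ u in a..b, ‖deriv (fun r => γ r + ε • deriv (deriv γ) r) u‖)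
      (a - b) 0 := by
  have hvel : ∀ (ε : ℝ) u, deriv (fun r => γ r + ε • deriv (deriv γ) r) u =
      deriv γ u + ε • deriv (deriv (deriv γ)) u := fun ε u =>
    deriv_add_const_smul ε (hγ.differentiable_deriv_iterate 0 (by norm_num) u)
      (hγ.differentiable_deriv_iterate 2 (by norm_num) u)
  simp only [hvel]
  simpa [hunit, inner_deriv_deriv_deriv_eq_neg_one hγ hunit hκ] using
    hasDerivAt_intervalIntegral_norm_add_smul (a := a) (b := b)
      (hγ.differentiable_deriv_iterate 1 (by norm_num)).continuous
      (hγ.continuous_deriv_iterate 3 le_rfl) fun u => norm_ne_zero_iff.mp (by simp [hunit])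

end InnerProductSpace

section Curve

variable {n : ℕ}

theorem curv_const_smul (c : ℝ) (α : ℝ → EuclideanSpace ℝ (Fin n)) (t : ℝ) :
    curv (fun s => c • α s) t = |c|⁻¹ * curv α t := by
  have hα' : deriv (fun s => c • α s) = fun s => c • deriv α s :=
    funext fun s => deriv_fun_const_smul_field c α
  rcases eq_or_ne c 0 with rfl | hc
  · simp [curv]
  have hnum : ∀ v a : EuclideanSpace ℝ (Fin n),
      ⟪c • v, c • v⟫ • (c • a) - ⟪c • a, c • v⟫ • (c • v) = c ^ 3 • (⟪v, v⟫ • a - ⟪a, v⟫ • v) := by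
    intro v a
    simp only [real_inner_smul_left, real_inner_smul_right]
    module
  simp only [curv, hα', deriv_fun_const_smul_field, hnum, norm_smul, Real.norm_eq_abs, abs_pow]
  field_simp

theorem curv_add_smul {γ η : ℝ → EuclideanSpace ℝ (Fin n)} (ε : ℝ) {t : ℝ}
    (hγ : Differentiable ℝ γ) (hη : Differentiable ℝ η) (hγ' : DifferentiableAt ℝ (deriv γ) t)
    (hη' : DifferentiableAt ℝ (deriv η) t) :
    curv (fun s => γ s + ε • η s) t =
      curvatureOf (deriv γ t + ε • deriv η t) (deriv (deriv γ) t + ε • deriv (deriv η) t) := by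
  have hv : deriv (fun s => γ s + ε • η s) = fun s => deriv γ s + ε • deriv η s :=
    funext fun s => deriv_add_const_smul ε (hγ s) (hη s)
  rw [curv, hv, deriv_add_const_smul ε hγ' hη']
  rfl

theorem curv_eq_one {γ : ℝ → EuclideanSpace ℝ (Fin n)} (hγ : ContDiff ℝ 2 γ)
    (hunit : ∀ t, ‖deriv γ t‖ = 1) (hκ : ∀ t, ‖deriv (deriv γ) t‖ = 1) (t : ℝ) :
    curv γ t = 1 :=
  (curvatureOf_of_norm_eq_one (hunit t) (inner_deriv_self_eq_zero
    (hγ.differentiable_deriv_iterate 1 (by norm_num) t) hunit)).trans (hκ t)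

theorem hasDerivAt_curv_add_smul_normal {γ : ℝ → EuclideanSpace ℝ (Fin n)} (hγ : ContDiff ℝ 4 γ)
    (hunit : ∀ t, ‖deriv γ t‖ = 1) (hκ : ∀ t, ‖deriv (deriv γ) t‖ = 1) (t : ℝ) :
    HasDerivAt (fun ε : ℝ => curv (fun s => γ s + ε • deriv (deriv γ) s) t)
      (2 - ‖deriv (deriv (deriv γ)) t‖ ^ 2) 0 := by
  have d0 : Differentiable ℝ γ := hγ.differentiable_deriv_iterate 0 (by norm_num)
  have d1 : Differentiable ℝ (deriv γ) := hγ.differentiable_deriv_iterate 1 (by norm_num)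
  have d2 : Differentiable ℝ (deriv (deriv γ)) := hγ.differentiable_deriv_iterate 2 (by norm_num)
  have d3 : Differentiable ℝ (deriv (deriv (deriv γ))) :=
    hγ.differentiable_deriv_iterate 3 (by norm_num)
  rw [funext fun ε => curv_add_smul ε d0 d2 (d1 t) (d3 t)]
  have hNT : ⟪deriv (deriv γ) t, deriv γ t⟫ = 0 := inner_deriv_self_eq_zero (d1 t) hunit
  refine (hasDerivAt_curvatureOf_add_smul (hunit t) hNT
    (norm_ne_zero_iff.mp (by simp [hκ t]))).congr_deriv ?_
  rw [real_inner_comm, inner_deriv_deriv_self_eq_neg_norm_sq d2 (d3 t) hκ,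
    inner_deriv_deriv_deriv_eq_neg_one (hγ.of_le (by norm_num)) hunit hκ, hκ t]
  ring

end Curve

theorem normal_variation_decreases_curvature_general {n : ℕ} (L : ℝ) (hL : 0 < L)
    (γ : ℝ → EuclideanSpace ℝ (Fin n)) (hγ : ContDiff ℝ 4 γ)
    (hunit : ∀ t, ‖deriv γ t‖ = 1)
    (hκ : ∀ t, ‖deriv (deriv γ) t‖ = 1)
    (hτ : ∀ t, 0 < ‖deriv (deriv (deriv γ)) t + deriv γ t‖) :
    ∀ t : ℝ,
      HasDerivAt
        (fun ε : ℝ =>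
          curv (fun s =>
            (L / ∫ u in (0:ℝ)..L,
                ‖deriv (fun r => γ r + ε • deriv (deriv γ) r) u‖) •
              (γ s + ε • deriv (deriv γ) s)) t)
        (-(‖deriv (deriv (deriv γ)) t + deriv γ t‖ ^ 2)) 0 ∧
      -(‖deriv (deriv (deriv γ)) t + deriv γ t‖ ^ 2) < 0 := by
  intro t
  have hγ3 : ContDiff ℝ 3 γ := hγ.of_le (by norm_num)
  set ℓ := fun ε : ℝ => ∫ u in (0:ℝ)..L, ‖deriv (fun r => γ r + ε • deriv (deriv γ) r) u‖
  have hℓ0 : ℓ 0 = L := by simp [ℓ, hunit]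
  have hscale : HasDerivAt (fun ε => |ℓ ε / L|) (-1) 0 := by
    have h := (hasDerivAt_abs_pos (x := ℓ 0 / L) (by simp [hℓ0, hL])).comp 0
      ((hasDerivAt_length_add_smul_normal (a := 0) (b := L) hγ3 hunit hκ).div_const L)
    exact h.congr_deriv (by simp [hL.ne'])
  have hτsq : ‖deriv (deriv (deriv γ)) t + deriv γ t‖ ^ 2 =
      ‖deriv (deriv (deriv γ)) t‖ ^ 2 - 1 := by
    rw [norm_add_sq_real, hunit t, real_inner_comm, inner_deriv_deriv_deriv_eq_neg_one hγ3 hunit hκ]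
    ring
  simp only [curv_const_smul, ← abs_inv, inv_div]
  refine ⟨?_, neg_neg_of_pos (pow_pos (hτ t) 2)⟩
  refine (hscale.mul (hasDerivAt_curv_add_smul_normal hγ hunit hκ t)).congr_deriv ?_
  simp [curv_eq_one (hγ.of_le (by norm_num)) hunit hκ, hℓ0, hL.ne', hτsq]
  ring

/-- For a closed unit-speed C⁴ curve of constant curvature 1 and positive torsion,
the rescaled normal variation Γ_ε = (L/ℓ(γ+εN))·(γ+εN) along the principal
normal N = γ'' satisfies d/dε|₀ κΓ_ε(t) = −τ(t)² < 0. -/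
theorem normal_variation_decreases_curvature {n : ℕ} (L : ℝ) (hL : 0 < L)
    (γ : ℝ → EuclideanSpace ℝ (Fin n)) (hγ : ContDiff ℝ 4 γ)
    (hper : Function.Periodic γ L)
    (hunit : ∀ t, ‖deriv γ t‖ = 1)
    (hκ : ∀ t, ‖deriv (deriv γ) t‖ = 1)
    (hτ : ∀ t, 0 < ‖deriv (deriv (deriv γ)) t + deriv γ t‖) :
    ∀ t : ℝ,
      HasDerivAt
        (fun ε : ℝ =>
          curv (fun s =>
            (L / ∫ u in (0:ℝ)..L,
                ‖deriv (fun r => γ r + ε • deriv (deriv γ) r) u‖) •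
              (γ s + ε • deriv (deriv γ) s)) t)
        (-(‖deriv (deriv (deriv γ)) t + deriv γ t‖ ^ 2)) 0 ∧
      -(‖deriv (deriv (deriv γ)) t + deriv γ t‖ ^ 2) < 0 :=
  normal_variation_decreases_curvature_general L hL γ hγ hunit hκ hτ
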